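/- Fix m ≥ 2 mean times between false alarms 1 ≤ τ_1 < ⋯ < τ_m, c_F > 0, and attacker types φ = 1,…,n_φ with priors π_φ ≥ 0 summing to 1 and payoffs satisfying 0 ≤ I_1^φ ≤ I_2^φ ≤ ⋯ ≤ I_m^φ for every φ. If c_F/τ_{m−1} > c_F/τ_m + Σ_{φ=1}^{n_φ} π_φ I_m^φ, then in every Bayesian Nash equilibrium (p*, q*_1, …, q*_{n_φ}) the defender's strategy is pure with p*_m = 1 (and p*_ν = 0 for all ν < m). In particular, no moving target defense exists. -/

import Mathlib

open Matrix BigOperators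

/-- A (mixed strategy) probability vector: nonnegative entries summing to one. -/
def IsProbVec {m : ℕ} (p : Fin m → ℝ) : Prop := (∀ i, 0 ≤ p i) ∧ ∑ i, p i = 1

/-- Defender cost matrix `Ω(φ)_{i,j} = c_F/τ_i + 1{j ≤ i}·I_j^φ`. -/
noncomputable def OmegaMat {m nφ : ℕ} (τ : Fin m → ℝ) (cF : ℝ) (I : Fin nφ → Fin m → ℝ)
    (φ : Fin nφ) : Matrix (Fin m) (Fin m) ℝ :=
  Matrix.of fun i j => cF / τ i + if j ≤ i then I φ j else 0

/-- Attacker payoff matrix `Υ(φ)_{i,j} = 1{j ≤ i}·I_j^φ`. -/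
noncomputable def UpsilonMat {m nφ : ℕ} (I : Fin nφ → Fin m → ℝ) (φ : Fin nφ) :
    Matrix (Fin m) (Fin m) ℝ :=
  Matrix.of fun i j => if j ≤ i then I φ j else 0

/-- Bayesian Nash equilibrium of the threshold-switching game: `p` minimizes the
prior-averaged defender cost against `(q_φ)` and each `q_φ` maximizes the payoff of
attacker type `φ` against `p`. -/
noncomputable def IsBNE {m nφ : ℕ} (τ : Fin m → ℝ) (cF : ℝ) (I : Fin nφ → Fin m → ℝ)
    (π : Fin nφ → ℝ) (p : Fin m → ℝ) (q : Fin nφ → Fin m → ℝ) : Prop :=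
  IsProbVec p ∧ (∀ φ, IsProbVec (q φ)) ∧
  (∀ p' : Fin m → ℝ, IsProbVec p' →
    ∑ φ, π φ * (p ⬝ᵥ (OmegaMat τ cF I φ *ᵥ q φ)) ≤
      ∑ φ, π φ * (p' ⬝ᵥ (OmegaMat τ cF I φ *ᵥ q φ))) ∧
  (∀ φ, ∀ q' : Fin m → ℝ, IsProbVec q' →
    p ⬝ᵥ (UpsilonMat I φ *ᵥ q') ≤ p ⬝ᵥ (UpsilonMat I φ *ᵥ q φ))

/-! Against a fixed attacker profile `q`, the defender's prior-averaged cost is linear in `p`,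
with coefficient `C_i = c_F/τ_i + Σ_φ π_φ (Υ(φ) q_φ)_i` on the pure threshold `τ_i`. Since
`0 ≤ (Υ(φ) q_φ)_i ≤ I_m^φ`, the hypothesis gives `C_m ≤ c_F/τ_m + Σ_φ π_φ I_m^φ < c_F/τ_{m-1} ≤ C_i`
for every `i < m`. So `τ_m` is the unique minimiser of `C`, and a best response `p`, which does
at least as well as the pure strategy `τ_m`, can put no mass elsewhere. -/

section Simplex

variable {ι κ : Type*} [Fintype ι]

lemma eq_single_of_mem_stdSimplex_of_dotProduct_le [DecidableEq ι] {p C : ι → ℝ} {i₀ : ι}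
    (hp : p ∈ stdSimplex ℝ ι) (hmin : ∀ i ≠ i₀, C i₀ < C i) (hle : p ⬝ᵥ C ≤ C i₀) :
    p = Pi.single i₀ 1 := by
  have hgap : ∑ i, p i * (C i - C i₀) = p ⬝ᵥ C - C i₀ := by
    simp only [dotProduct, mul_sub, Finset.sum_sub_distrib, ← Finset.sum_mul, hp.2, one_mul]
  have hterm : ∀ i ∈ Finset.univ, 0 ≤ p i * (C i - C i₀) := fun i _ => by
    rcases eq_or_ne i i₀ with rfl | hi
    · simp
    · exact mul_nonneg (hp.1 i) (sub_nonneg.2 (hmin i hi).le)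
  have hsum : ∑ i, p i * (C i - C i₀) = 0 :=
    le_antisymm (by linarith) (Finset.sum_nonneg hterm)
  have hzero : ∀ i ≠ i₀, p i = 0 := fun i hi => by
    have := (Finset.sum_eq_zero_iff_of_nonneg hterm).1 hsum i (Finset.mem_univ i)
    exact (mul_eq_zero.1 this).resolve_right (sub_ne_zero.2 (hmin i hi).ne')
  have hone : p i₀ = 1 := by
    rw [← hp.2, Finset.sum_eq_single i₀ (fun i _ hi => hzero i hi) (by simp)]
  ext i
  rcases eq_or_ne i i₀ with rfl | hi
  · simp [hone]
  · simp [hzero i hi, hi]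

lemma sum_mul_dotProduct {Φ : Type*} [Fintype Φ] (π : Φ → ℝ) (p : ι → ℝ) (v : Φ → ι → ℝ) :
    ∑ φ, π φ * (p ⬝ᵥ v φ) = p ⬝ᵥ ∑ φ, π φ • v φ := by
  simp [dotProduct_sum, dotProduct_smul]

lemma mulVec_apply_nonneg {A : Matrix κ ι ℝ} {q : ι → ℝ} (hq : 0 ≤ q) {k : κ}
    (hA : ∀ j, 0 ≤ A k j) : 0 ≤ (A *ᵥ q) k :=
  Finset.sum_nonneg fun j _ => mul_nonneg (hA j) (hq j)

lemma mulVec_apply_le {A : Matrix κ ι ℝ} {q : ι → ℝ} (hq : q ∈ stdSimplex ℝ ι) {k : κ} {b : ℝ}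
    (hA : ∀ j, A k j ≤ b) : (A *ᵥ q) k ≤ b :=
  calc (A *ᵥ q) k = ∑ j, A k j * q j := rfl
    _ ≤ ∑ j, b * q j := Finset.sum_le_sum fun j _ => mul_le_mul_of_nonneg_right (hA j) (hq.1 j)
    _ = b := by rw [← Finset.mul_sum, hq.2, mul_one]

end Simplex

section Game

variable {m nφ : ℕ} {τ : Fin m → ℝ} {cF : ℝ} {I : Fin nφ → Fin m → ℝ} {π : Fin nφ → ℝ}
  {q : Fin nφ → Fin m → ℝ}

lemma UpsilonMat_nonneg (hI : ∀ φ j, 0 ≤ I φ j) (φ : Fin nφ) (i j : Fin m) :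
    0 ≤ UpsilonMat I φ i j := by
  simp only [UpsilonMat, of_apply]
  split_ifs
  exacts [hI φ j, le_rfl]

lemma UpsilonMat_le {φ : Fin nφ} {b : ℝ} (hI : ∀ φ j, 0 ≤ I φ j) (hb : ∀ j, I φ j ≤ b)
    (i j : Fin m) : UpsilonMat I φ i j ≤ b := by
  simp only [UpsilonMat, of_apply]
  split_ifs
  exacts [hb j, (hI φ j).trans (hb j)]

lemma OmegaMat_mulVec {φ : Fin nφ} {v : Fin m → ℝ} (hv : v ∈ stdSimplex ℝ (Fin m)) :
    OmegaMat τ cF I φ *ᵥ v = (fun i => cF / τ i) + UpsilonMat I φ *ᵥ v := by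
  ext i
  simp only [mulVec, dotProduct, OmegaMat, UpsilonMat, of_apply, add_mul,
    Finset.sum_add_distrib, ← Finset.mul_sum, hv.2, mul_one, Pi.add_apply]

variable (τ cF I π q) in
noncomputable def defenderCostVec : Fin m → ℝ := ∑ φ, π φ • (OmegaMat τ cF I φ *ᵥ q φ)

lemma defenderCostVec_apply (hπ1 : ∑ φ, π φ = 1) (hq : ∀ φ, q φ ∈ stdSimplex ℝ (Fin m))
    (i : Fin m) :
    defenderCostVec τ cF I π q i = cF / τ i + ∑ φ, π φ * (UpsilonMat I φ *ᵥ q φ) i := by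
  simp only [defenderCostVec, OmegaMat_mulVec (hq _), Finset.sum_apply, Pi.smul_apply,
    Pi.add_apply, smul_eq_mul, mul_add, Finset.sum_add_distrib, ← Finset.sum_mul, hπ1, one_mul]

lemma div_le_defenderCostVec (hπ0 : ∀ φ, 0 ≤ π φ) (hπ1 : ∑ φ, π φ = 1)
    (hq : ∀ φ, q φ ∈ stdSimplex ℝ (Fin m)) (hI : ∀ φ j, 0 ≤ I φ j) (i : Fin m) :
    cF / τ i ≤ defenderCostVec τ cF I π q i := by
  rw [defenderCostVec_apply hπ1 hq]
  exact le_add_of_nonneg_right <| Finset.sum_nonneg fun φ _ =>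
    mul_nonneg (hπ0 φ) (mulVec_apply_nonneg (hq φ).1 (UpsilonMat_nonneg hI φ i))

lemma defenderCostVec_le {b : Fin nφ → ℝ} (hπ0 : ∀ φ, 0 ≤ π φ) (hπ1 : ∑ φ, π φ = 1)
    (hq : ∀ φ, q φ ∈ stdSimplex ℝ (Fin m)) (hI : ∀ φ j, 0 ≤ I φ j) (hb : ∀ φ j, I φ j ≤ b φ)
    (i : Fin m) : defenderCostVec τ cF I π q i ≤ cF / τ i + ∑ φ, π φ * b φ := by
  rw [defenderCostVec_apply hπ1 hq]
  gcongr with φ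
  · exact hπ0 φ
  · exact mulVec_apply_le (hq φ) (UpsilonMat_le hI (hb φ) i)

end Game

/-- If `c_F/τ_{m-1} > c_F/τ_m + Σ_φ π_φ I_m^φ`, then in every Bayesian Nash equilibrium the
defender's strategy is pure with all mass on `τ_m`; in particular no MTD exists. -/
theorem no_mtd_of_strict_domination (m nφ : ℕ) (hm : 2 ≤ m)
    (τ : Fin m → ℝ) (hτmono : StrictMono τ) (hτ1 : 1 ≤ τ ⟨0, by omega⟩)
    (cF : ℝ) (hcF : 0 < cF)
    (π : Fin nφ → ℝ) (hπ0 : ∀ φ, 0 ≤ π φ) (hπ1 : ∑ φ, π φ = 1)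
    (I : Fin nφ → Fin m → ℝ) (hI0 : ∀ φ, 0 ≤ I φ ⟨0, by omega⟩)
    (hImono : ∀ φ, Monotone (I φ))
    (hdom : cF / τ ⟨m - 2, by omega⟩ >
      cF / τ ⟨m - 1, by omega⟩ + ∑ φ, π φ * I φ ⟨m - 1, by omega⟩) :
    ∀ (p : Fin m → ℝ) (q : Fin nφ → Fin m → ℝ), IsBNE τ cF I π p q →
      p ⟨m - 1, by omega⟩ = 1 ∧ ∀ ν : Fin m, (ν : ℕ) < m - 1 → p ν = 0 := by
  rintro p q ⟨hp, hq, hopt, -⟩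
  set last : Fin m := ⟨m - 1, by omega⟩
  set C := defenderCostVec τ cF I π q
  have hτpos (i : Fin m) : 0 < τ i :=
    one_pos.trans_le (hτ1.trans (hτmono.monotone (Nat.zero_le i)))
  have hI (φ : Fin nφ) (j : Fin m) : 0 ≤ I φ j := (hI0 φ).trans (hImono φ (Nat.zero_le j))
  have hCmin : ∀ i ≠ last, C last < C i := fun i hi => by
    have hi' : i ≤ ⟨m - 2, by omega⟩ := by
      have : (i : ℕ) ≠ m - 1 := fun h => hi (Fin.ext h)
      show (i : ℕ) ≤ m - 2; omega
    calc C last ≤ cF / τ last + ∑ φ, π φ * I φ last :=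
          defenderCostVec_le hπ0 hπ1 hq hI (fun φ j => hImono φ (by omega : (j : ℕ) ≤ m - 1)) last
      _ < cF / τ ⟨m - 2, by omega⟩ := hdom
      _ ≤ cF / τ i := div_le_div_of_nonneg_left hcF.le (hτpos i) (hτmono.monotone hi')
      _ ≤ C i := div_le_defenderCostVec hπ0 hπ1 hq hI i
  have hle : p ⬝ᵥ C ≤ C last := by
    have := hopt _ (single_mem_stdSimplex ℝ last)
    rwa [sum_mul_dotProduct, sum_mul_dotProduct, single_one_dotProduct] at this
  obtain rfl := eq_single_of_mem_stdSimplex_of_dotProduct_le hp hCmin hle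
  exact ⟨by simp [last], fun ν hν => Pi.single_eq_of_ne (Fin.ne_of_lt hν) 1⟩
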